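/- arXiv:1601.04254 — 2 statements merged into one kernel-verified Lean document; each statement's English description precedes it below -/
import Mathlib

section
/- Let Z be a set, ≤ a linear order on M(Z), S ⊆ kM(Z) monicized with respect to ≤, and Π_S the term-rewriting system from ≤. If Π_S is terminating and Id(S) ∩ k·Irr(S) = 0, then Π_S is confluent, where Irr(S) = M(Z) ∖ { q|_{lm(s)} : q ∈ M^⋆(Z), s ∈ S }. -/
namespace RotaGS

/-- Bracketed words on `Z`: elements of the free operated monoid `M(Z)`.
A bracketed word is a (possibly empty) list of letters, each letter being either a
variable from `Z` or a bracketed word `⌊u⌋`. -/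
inductive OpWord (Z : Type) : Type
  | one : OpWord Z
  | var : Z → OpWord Z → OpWord Z
  | brkCons : OpWord Z → OpWord Z → OpWord Z

namespace OpWord

variable {Z : Type}

/-- Concatenation (product) of bracketed words. -/
def mul : OpWord Z → OpWord Z → OpWord Z
  | one, w => w
  | var z u, w => var z (mul u w)
  | brkCons b u, w => brkCons b (mul u w)

instance : Mul (OpWord Z) := ⟨mul⟩
instance : One (OpWord Z) := ⟨one⟩

/-- The operator `u ↦ ⌊u⌋`. -/
def brk (u : OpWord Z) : OpWord Z := brkCons u one

/-- Substitution of bracketed words for variables. -/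
def substVar {Y : Type} (σ : Z → OpWord Y) : OpWord Z → OpWord Y
  | one => one
  | var z w => (σ z).mul (substVar σ w)
  | brkCons u w => brkCons (substVar σ u) (substVar σ w)

/-- The breadth `|f|` of a bracketed word. -/
def breadth : OpWord Z → ℕ
  | one => 0
  | var _ w => 1 + breadth w
  | brkCons _ w => 1 + breadth w

/-- Number of occurrences of the variable `x` in a bracketed word. -/
def varCount [DecidableEq Z] (x : Z) : OpWord Z → ℕ
  | one => 0
  | var z w => (if z = x then 1 else 0) + varCount x w
  | brkCons u w => varCount x u + varCount x w

end OpWord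

/-- `⋆`-bracketed words on `Z`: bracketed words on `Z ∪ {⋆}` with exactly one
occurrence of `⋆`. -/
inductive StarWord (Z : Type) : Type
  | star : StarWord Z
  | brk : StarWord Z → StarWord Z
  | mul : OpWord Z → StarWord Z → OpWord Z → StarWord Z

/-- `q|_u` : replace `⋆` in `q` by the bracketed word `u`. -/
def StarWord.subst {Z : Type} : StarWord Z → OpWord Z → OpWord Z
  | .star, u => u
  | .brk q, u => OpWord.brk (q.subst u)
  | .mul a q b, u => a.mul ((q.subst u).mul b)

/-- The free `k`-module `kM(Z)` with basis the bracketed words `M(Z)`. -/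
abbrev kM (k Z : Type) [Field k] : Type := OpWord Z →₀ k

/-- The linear extension `q|_s` of `u ↦ q|_u`. -/
noncomputable def StarWord.substF {k Z : Type} [Field k] (q : StarWord Z) (s : kM k Z) : kM k Z :=
  Finsupp.mapDomain q.subst s

/-- Substitution (evaluation) of an operated polynomial `φ ∈ kM(X)` along an
assignment `σ` of bracketed words to the variables. -/
noncomputable def substOPI {k X Z : Type} [Field k] (σ : X → OpWord Z) (φ : kM k X) : kM k Z :=
  Finsupp.mapDomain (OpWord.substVar σ) φ

/-- Right multiplication `f · u` of `f ∈ kM(Z)` by a word `u`. -/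
noncomputable def mulWordRight {k Z : Type} [Field k] (f : kM k Z) (u : OpWord Z) : kM k Z :=
  Finsupp.mapDomain (fun m => m.mul u) f

/-- Left multiplication `v · g` of `g ∈ kM(Z)` by a word `v`. -/
noncomputable def mulWordLeft {k Z : Type} [Field k] (v : OpWord Z) (g : kM k Z) : kM k Z :=
  Finsupp.mapDomain (fun m => v.mul m) g

/-- `lt` is a monomial order on `M(Z)`: a well-order such that `u < v` implies
`q|_u < q|_v` for every `⋆`-bracketed word `q`. -/
structure IsMonomialOrder {Z : Type} (lt : OpWord Z → OpWord Z → Prop) : Prop where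
  wellOrder : IsWellOrder (OpWord Z) lt
  compat : ∀ (q : StarWord Z) (u v : OpWord Z), lt u v → lt (q.subst u) (q.subst v)

/-- `w` is the leading monomial of `f` with respect to the strict order `lt`. -/
def IsLeadingMonomial {k Z : Type} [Field k] (lt : OpWord Z → OpWord Z → Prop)
    (f : kM k Z) (w : OpWord Z) : Prop :=
  w ∈ f.support ∧ ∀ w' ∈ f.support, w' ≠ w → lt w' w

/-- `S` is monicized with respect to `lt`: every `s ∈ S` has leading coefficient `1`. -/
def Monicized {k Z : Type} [Field k] (lt : OpWord Z → OpWord Z → Prop)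
    (S : Set (kM k Z)) : Prop :=
  ∀ s ∈ S, ∃ w, IsLeadingMonomial lt s w ∧ s w = 1

/-- `R(s)` for `s` oriented at the monomial `w`, after monicization:
`R(s) = w − (coefficient of w in s)⁻¹ • s`. -/
noncomputable def Rrem {k Z : Type} [Field k] (s : kM k Z) (w : OpWord Z) : kM k Z :=
  Finsupp.single w 1 - (s w)⁻¹ • s

section TRS

variable {k W : Type} [Field k]

/-- One-step rewriting for a term-rewriting system `R ⊆ W × kW` on the free module
with basis `W`: if `f = c·t + f'` with `c ≠ 0`, `t ∉ Supp f'` and `(t,v) ∈ R`,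
then `f` rewrites to `c·v + f'`. -/
def OneStep (R : Set (W × (W →₀ k))) (f g : W →₀ k) : Prop :=
  ∃ (c : k) (t : W) (v f' : W →₀ k),
    c ≠ 0 ∧ (t, v) ∈ R ∧ t ∉ f'.support ∧
    f = Finsupp.single t c + f' ∧ g = c • v + f'

/-- `f →* g`: reflexive-transitive closure of one-step rewriting. -/
def Rewrites (R : Set (W × (W →₀ k))) : (W →₀ k) → (W →₀ k) → Prop :=
  Relation.ReflTransGen (OneStep R)

/-- `f ↓ g`: joinability. -/
def Joinable (R : Set (W × (W →₀ k))) (f g : W →₀ k) : Prop :=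
  ∃ h, Rewrites R f h ∧ Rewrites R g h

/-- A term-rewriting system is simple if `t ∉ Supp v` for every rule `t → v`. -/
def SimpleTRS (R : Set (W × (W →₀ k))) : Prop := ∀ p ∈ R, p.1 ∉ p.2.support

/-- Terminating: no infinite chain of one-step rewritings. -/
def Terminating (R : Set (W × (W →₀ k))) : Prop :=
  ¬ ∃ seq : ℕ → (W →₀ k), ∀ n, OneStep R (seq n) (seq (n + 1))

/-- Confluent: every fork is joinable. -/
def Confluent (R : Set (W × (W →₀ k))) : Prop :=
  ∀ ⦃f g₁ g₂ : W →₀ k⦄, Rewrites R f g₁ → Rewrites R f g₂ → Joinable R g₁ g₂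

/-- Locally confluent: every local fork is joinable. -/
def LocallyConfluent (R : Set (W × (W →₀ k))) : Prop :=
  ∀ ⦃f g₁ g₂ : W →₀ k⦄, OneStep R f g₁ → OneStep R f g₂ → Joinable R g₁ g₂

/-- Convergent: terminating and confluent. -/
def ConvergentTRS (R : Set (W × (W →₀ k))) : Prop := Terminating R ∧ Confluent R

end TRS

/-- The term-rewriting system `Π_S` from the order `lt`:
rules `q|_{lm(s)} → q|_{R(s)}` for `s ∈ S`, `q ∈ M^⋆(Z)`. -/
def PiS {k Z : Type} [Field k] (lt : OpWord Z → OpWord Z → Prop) (S : Set (kM k Z)) :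
    Set (OpWord Z × kM k Z) :=
  { p | ∃ s ∈ S, ∃ w, IsLeadingMonomial lt s w ∧
        ∃ q : StarWord Z, p = (q.subst w, q.substF (Rrem s w)) }

/-- The term-rewriting system associated to `S` with respect to an
orientation `or` (a choice of a monomial `or s` for each `s ∈ S`). -/
def assocTRS {k Z : Type} [Field k] (S : Set (kM k Z)) (or : kM k Z → OpWord Z) :
    Set (OpWord Z × kM k Z) :=
  { p | ∃ s ∈ S, ∃ q : StarWord Z, p = (q.subst (or s), q.substF (Rrem s (or s))) }

/-- `or` is an orientation of `S`: it picks a monomial of each `s ∈ S`. -/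
def IsOrientation {k Z : Type} [Field k] (S : Set (kM k Z)) (or : kM k Z → OpWord Z) : Prop :=
  ∀ s ∈ S, or s ∈ s.support

/-- The operated ideal `Id(S)` generated by `S`:
`Id(S) = { Σᵢ cᵢ qᵢ|_{sᵢ} : cᵢ ∈ k, qᵢ ∈ M^⋆(Z), sᵢ ∈ S }`. -/
noncomputable def OpIdeal {k Z : Type} [Field k] (S : Set (kM k Z)) : Submodule k (kM k Z) :=
  Submodule.span k { x | ∃ s ∈ S, ∃ q : StarWord Z, x = q.substF s }

/-- `Irr(S) = M(Z) ∖ { q|_{lm(s)} : q ∈ M^⋆(Z), s ∈ S }`. -/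
def IrrSet {k Z : Type} [Field k] (lt : OpWord Z → OpWord Z → Prop) (S : Set (kM k Z)) :
    Set (OpWord Z) :=
  { w | ¬ ∃ s ∈ S, ∃ ws, IsLeadingMonomial lt s ws ∧ ∃ q : StarWord Z, w = q.subst ws }

/-- The `k`-linear span of a set of bracketed words inside `kM(Z)`. -/
noncomputable def spanSet (k : Type) [Field k] {Z : Type} (T : Set (OpWord Z)) : Submodule k (kM k Z) :=
  Submodule.span k ((fun w => Finsupp.single w (1 : k)) '' T)

/-- `h` is trivial modulo `(S, w)`: `h = Σᵢ cᵢ qᵢ|_{sᵢ}` with `qᵢ|_{lm(sᵢ)} < w`. -/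
def TrivialMod {k Z : Type} [Field k] (lt : OpWord Z → OpWord Z → Prop)
    (S : Set (kM k Z)) (w : OpWord Z) (h : kM k Z) : Prop :=
  ∃ (n : ℕ) (c : Fin n → k) (q : Fin n → StarWord Z) (s : Fin n → kM k Z),
    (∀ i, s i ∈ S) ∧
    (∀ i, ∃ wi, IsLeadingMonomial lt (s i) wi ∧ lt ((q i).subst wi) w) ∧
    h = ∑ i, c i • (q i).substF (s i)

/-- The monicization of `S` with respect to `lt`. -/
def MonicVersion {k Z : Type} [Field k] (lt : OpWord Z → OpWord Z → Prop)
    (S : Set (kM k Z)) : Set (kM k Z) :=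
  { f | ∃ s ∈ S, ∃ w, IsLeadingMonomial lt s w ∧ f = (s w)⁻¹ • s }

/-- `S` is a Gröbner–Shirshov basis in `kM(Z)` with respect to `lt`: after
monicization, every intersection composition and every including composition of
pairs of elements of `S` is trivial modulo `(S, w)`. -/
def IsGSBasis {k Z : Type} [Field k] (lt : OpWord Z → OpWord Z → Prop)
    (S : Set (kM k Z)) : Prop :=
  (∀ f ∈ MonicVersion lt S, ∀ g ∈ MonicVersion lt S,
    ∀ (wf wg u v w : OpWord Z),
      IsLeadingMonomial lt f wf → IsLeadingMonomial lt g wg →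
      w = wf.mul u → w = v.mul wg →
      max wf.breadth wg.breadth < w.breadth →
      w.breadth < wf.breadth + wg.breadth →
      TrivialMod lt (MonicVersion lt S) w (mulWordRight f u - mulWordLeft v g)) ∧
  (∀ f ∈ MonicVersion lt S, ∀ g ∈ MonicVersion lt S,
    ∀ (wf wg : OpWord Z) (q : StarWord Z),
      IsLeadingMonomial lt f wf → IsLeadingMonomial lt g wg →
      wf = q.subst wg →
      TrivialMod lt (MonicVersion lt S) wf (f - q.substF g))

/-- `S_Φ(Z)`: all substitution instances in `kM(Z)` of OPIs from `Φ ⊆ kM(X)`. -/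
def SPhi {k X : Type} [Field k] (Φ : Set (kM k X)) (Z : Type) : Set (kM k Z) :=
  { f | ∃ φ ∈ Φ, ∃ σ : X → OpWord Z, f = substOPI σ φ }

/-- A system of OPIs `Φ` is Gröbner–Shirshov if for every set `Z` there is a
monomial order on `M(Z)` making `S_Φ(Z)` a Gröbner–Shirshov basis. -/
def GSOPI {k X : Type} [Field k] (Φ : Set (kM k X)) : Prop :=
  ∀ Z : Type, ∃ lt : OpWord Z → OpWord Z → Prop,
    IsMonomialOrder lt ∧ IsGSBasis lt (SPhi Φ Z)

/-- A system of OPIs `Φ` is convergent if for every set `Z` there is an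
orientation of `S_Φ(Z)` whose associated term-rewriting system is convergent. -/
def ConvergentOPI {k X : Type} [Field k] (Φ : Set (kM k X)) : Prop :=
  ∀ Z : Type, ∃ or : kM k Z → OpWord Z,
    IsOrientation (SPhi Φ Z) or ∧ ConvergentTRS (assocTRS (SPhi Φ Z) or)

/-- The first variable `x₁`. -/
def x1 : OpWord (Fin 2) := OpWord.var 0 OpWord.one

/-- The second variable `x₂`. -/
def x2 : OpWord (Fin 2) := OpWord.var 1 OpWord.one

/-- The averaging OPI `φ₁ = ⌊x₁⌋⌊x₂⌋ − ⌊⌊x₁⌋x₂⌋`. -/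
noncomputable def phi1 (k : Type) [Field k] : kM k (Fin 2) :=
  Finsupp.single ((OpWord.brk x1).mul (OpWord.brk x2)) 1
    - Finsupp.single (OpWord.brk ((OpWord.brk x1).mul x2)) 1

/-- The averaging OPI `φ₂ = ⌊x₁⌊x₂⌋⌋ − ⌊⌊x₁⌋x₂⌋`. -/
noncomputable def phi2 (k : Type) [Field k] : kM k (Fin 2) :=
  Finsupp.single (OpWord.brk (x1.mul (OpWord.brk x2))) 1
    - Finsupp.single (OpWord.brk ((OpWord.brk x1).mul x2)) 1

end RotaGS

namespace RotaGS

/-! Under termination every element has a normal form, and confluence reduces to uniqueness of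
normal forms. Each rewriting step subtracts a multiple of some `q|_s`, so two normal forms of one
element differ by an element of `Id(S)`; normal forms are supported on irreducible words, so the
difference also lies in `k·Irr(S)`, hence vanishes. -/

section TRS

variable {k W : Type} [Field k] {R : Set (W × (W →₀ k))}

def IsNormalForm (R : Set (W × (W →₀ k))) (g : W →₀ k) : Prop :=
  ∀ g', ¬ OneStep R g g'

theorem Terminating.wellFounded (hterm : Terminating R) : WellFounded (flip (OneStep R)) :=
  wellFounded_iff_isEmpty_descending_chain.mpr ⟨fun ⟨seq, hseq⟩ => hterm ⟨seq, hseq⟩⟩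

theorem Terminating.exists_normalForm (hterm : Terminating R) (f : W →₀ k) :
    ∃ g, Rewrites R f g ∧ IsNormalForm R g := by
  induction f using hterm.wellFounded.induction with
  | _ f ih =>
    by_cases hf : IsNormalForm R f
    · exact ⟨f, .refl, hf⟩
    · obtain ⟨g, hfg⟩ := not_forall_not.mp hf
      obtain ⟨h, hgh, hh⟩ := ih g hfg
      exact ⟨h, .head hfg hgh, hh⟩

theorem Terminating.confluent_of_normalForm_unique (hterm : Terminating R)
    (huniq : ∀ ⦃f h₁ h₂⦄, Rewrites R f h₁ → Rewrites R f h₂ →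
      IsNormalForm R h₁ → IsNormalForm R h₂ → h₁ = h₂) :
    Confluent R := by
  intro f g₁ g₂ hfg₁ hfg₂
  obtain ⟨h₁, hg₁h₁, hh₁⟩ := hterm.exists_normalForm g₁
  obtain ⟨h₂, hg₂h₂, hh₂⟩ := hterm.exists_normalForm g₂
  obtain rfl : h₁ = h₂ := huniq (hfg₁.trans hg₁h₁) (hfg₂.trans hg₂h₂) hh₁ hh₂
  exact ⟨h₁, hg₁h₁, hg₂h₂⟩

theorem IsNormalForm.apply_eq_zero {g : W →₀ k} (hg : IsNormalForm R g) {t : W} {v : W →₀ k}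
    (hR : (t, v) ∈ R) : g t = 0 := by
  by_contra ht
  exact hg _ ⟨g t, t, v, g.erase t, ht, hR, by simp, (Finsupp.single_add_erase t g).symm, rfl⟩

theorem Rewrites.sub_mem {I : Submodule k (W →₀ k)}
    (hR : ∀ p ∈ R, Finsupp.single p.1 1 - p.2 ∈ I) {f g : W →₀ k} (h : Rewrites R f g) :
    f - g ∈ I := by
  induction h with
  | refl => simp
  | @tail g g' _ hstep ih =>
    obtain ⟨c, t, v, f', -, hrule, -, rfl, rfl⟩ := hstep
    have hsplit : f - (c • v + f') =
        f - (Finsupp.single t c + f') + c • (Finsupp.single t 1 - v) := by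
      rw [smul_sub, Finsupp.smul_single_one]
      abel
    exact hsplit ▸ I.add_mem ih (I.smul_mem c (hR _ hrule))

end TRS

section PiS

variable {k Z : Type} [Field k] {lt : OpWord Z → OpWord Z → Prop} {S : Set (kM k Z)}

theorem StarWord.substF_single (q : StarWord Z) (w : OpWord Z) (c : k) :
    q.substF (Finsupp.single w c) = Finsupp.single (q.subst w) c :=
  Finsupp.mapDomain_single

theorem single_sub_mem_opIdeal_of_mem_piS {p : OpWord Z × kM k Z} (hp : p ∈ PiS lt S) :
    Finsupp.single p.1 1 - p.2 ∈ OpIdeal S := by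
  obtain ⟨s, hs, w, -, q, rfl⟩ := hp
  have hrule : Finsupp.single (q.subst w) 1 - q.substF (Rrem s w) = (s w)⁻¹ • q.substF s := by
    rw [← StarWord.substF_single, StarWord.substF, StarWord.substF, StarWord.substF,
      ← Finsupp.mapDomain_sub, Rrem, sub_sub_cancel, Finsupp.mapDomain_smul]
  exact hrule ▸ Submodule.smul_mem _ _ (Submodule.subset_span ⟨s, hs, q, rfl⟩)

theorem IsNormalForm.mem_spanSet_irrSet {g : kM k Z} (hg : IsNormalForm (PiS lt S) g) :
    g ∈ spanSet k (IrrSet lt S) := by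
  rw [spanSet, ← Finsupp.supported_eq_span_single, Finsupp.mem_supported]
  rintro t ht ⟨s, hs, ws, hws, q, rfl⟩
  exact Finsupp.mem_support_iff.mp ht (hg.apply_eq_zero ⟨s, hs, ws, hws, q, rfl⟩)

end PiS

theorem terminating_inf_irr_confluent_general {k Z : Type} [Field k]
    (lt : OpWord Z → OpWord Z → Prop)
    (S : Set (kM k Z))
    (hterm : Terminating (PiS lt S))
    (hcap : OpIdeal S ⊓ spanSet k (IrrSet lt S) = ⊥) :
    Confluent (PiS lt S) := by
  refine hterm.confluent_of_normalForm_unique fun f h₁ h₂ hfh₁ hfh₂ hh₁ hh₂ => ?_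
  have hIdeal : h₁ - h₂ ∈ OpIdeal S := by
    simpa using sub_mem (hfh₂.sub_mem fun _ => single_sub_mem_opIdeal_of_mem_piS)
      (hfh₁.sub_mem fun _ => single_sub_mem_opIdeal_of_mem_piS)
  have hIrr : h₁ - h₂ ∈ spanSet k (IrrSet lt S) :=
    sub_mem hh₁.mem_spanSet_irrSet hh₂.mem_spanSet_irrSet
  rw [← sub_eq_zero, ← Submodule.mem_bot k, ← hcap]
  exact ⟨hIdeal, hIrr⟩

/-- Let `Z` be a set, `≤` a linear order on `M(Z)`, `S ⊆ kM(Z)`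
monicized with respect to `≤`, and `Π_S` the term-rewriting system from `≤`.
If `Π_S` is terminating and `Id(S) ∩ k·Irr(S) = 0`, then `Π_S` is confluent. -/
theorem terminating_inf_irr_confluent {k Z : Type} [Field k]
    (lt : OpWord Z → OpWord Z → Prop) (hlin : IsStrictTotalOrder (OpWord Z) lt)
    (S : Set (kM k Z)) (hm : Monicized lt S)
    (hterm : Terminating (PiS lt S))
    (hcap : OpIdeal S ⊓ spanSet k (IrrSet lt S) = ⊥) :
    Confluent (PiS lt S) :=
  terminating_inf_irr_confluent_general lt S hterm hcap

end RotaGS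
end

section
/- Let Z be a set, ≤ a monomial order on M(Z), S ⊆ kM(Z) monicized with respect to ≤, and Π_S the term-rewriting system from ≤. Then the following statements are equivalent: (1) Π_S is convergent; (2) Π_S is confluent; (3) Id(S) ∩ k·Irr(S) = 0; (4) kM(Z) = Id(S) ⊕ k·Irr(S); (5) S is a Gröbner–Shirshov basis in kM(Z) with respect to ≤. Here Irr(S) = M(Z) ∖ { q|_{lm(s)} : q ∈ M^⋆(Z), s ∈ S }. -/
/-!
A rewriting step of `Π_S` at `t` kills the coefficient of `t` and changes only coefficients
below `t`, so it decreases lexicographically from the top: `Π_S` always terminates. Hence every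
`f` rewrites to an irreducible `n` with `f - n ∈ Id(S)`, which gives `Id(S) + k·Irr(S) = kM(Z)`,
and confluence amounts to uniqueness of irreducible normal forms, i.e. to
`Id(S) ∩ k·Irr(S) = 0`.

The Gröbner–Shirshov condition is compared with the stronger-looking condition that any two
ways `q₁|_{s₁}`, `q₂|_{s₂}` of producing the same leading word `w` differ by an element trivial
modulo `(S, w)` (`AmbiguitiesResolvable`). Confluence implies it, since the difference lies in
`Id(S)`, is supported below `w` and rewrites to `0`; and it contains the compositions as special
cases. For a Gröbner–Shirshov basis it follows by classifying the relative position of the two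
occurrences in `w`: nested (an including composition), overlapping (an intersection
composition) or separated (trivial for any `S`). Finally it gives the composition-diamond lemma:
by induction on the largest leading word of a representation, every nonzero element of `Id(S)`
has a leading monomial of the form `q|_{lm(s)}`, so `Id(S) ∩ k·Irr(S) = 0`.
-/

namespace RotaGS

namespace OpWord

variable {Z : Type}

theorem one_mul (w : OpWord Z) : one.mul w = w := rfl

theorem mul_one (w : OpWord Z) : w.mul one = w := by
  induction w with
  | one => rfl
  | var z u ih => exact congrArg (var z) ih
  | brkCons b u _ ih => exact congrArg (brkCons b) ih

theorem mul_assoc (a b c : OpWord Z) : (a.mul b).mul c = a.mul (b.mul c) := by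
  induction a with
  | one => rfl
  | var z u ih => exact congrArg (var z) ih
  | brkCons d u _ ih => exact congrArg (brkCons d) ih

theorem breadth_mul (a b : OpWord Z) : (a.mul b).breadth = a.breadth + b.breadth := by
  induction a with
  | one => simp [breadth, mul]
  | var z u ih => simp only [mul, breadth, ih]; omega
  | brkCons d u _ ih => simp only [mul, breadth, ih]; omega

theorem breadth_brk (v : OpWord Z) : (brk v).breadth = 1 := rfl

theorem breadth_eq_zero {u : OpWord Z} : u.breadth = 0 ↔ u = one := by
  cases u <;> simp [breadth]

theorem one_le_breadth {u : OpWord Z} (h : u ≠ one) : 1 ≤ u.breadth :=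
  Nat.one_le_iff_ne_zero.2 (breadth_eq_zero.not.2 h)

theorem levi {a b c d : OpWord Z} (h : a.mul b = c.mul d) :
    (∃ w, c = a.mul w ∧ b = w.mul d) ∨ (∃ w, a = c.mul w ∧ d = w.mul b) := by
  induction a generalizing c with
  | one => exact Or.inl ⟨c, rfl, h⟩
  | var z a' ih =>
    cases c with
    | one => exact Or.inr ⟨var z a', rfl, h.symm⟩
    | var z' c' =>
      obtain ⟨rfl, h2⟩ := var.inj h
      rcases ih h2 with ⟨w, rfl, rfl⟩ | ⟨w, rfl, rfl⟩
      · exact Or.inl ⟨w, rfl, rfl⟩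
      · exact Or.inr ⟨w, rfl, rfl⟩
    | brkCons => cases h
  | brkCons e a' _ ih =>
    cases c with
    | one => exact Or.inr ⟨brkCons e a', rfl, h.symm⟩
    | var => cases h
    | brkCons e' c' =>
      obtain ⟨rfl, h2⟩ := brkCons.inj h
      rcases ih h2 with ⟨w, rfl, rfl⟩ | ⟨w, rfl, rfl⟩
      · exact Or.inl ⟨w, rfl, rfl⟩
      · exact Or.inr ⟨w, rfl, rfl⟩

theorem brk_injective : Function.Injective (brk : OpWord Z → OpWord Z) :=
  fun _ _ h => (brkCons.inj h).1

theorem brk_ne_one (v : OpWord Z) : brk v ≠ one := nofun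

theorem brk_eq_mul_mul {v c u d : OpWord Z} (h : brk v = c.mul (u.mul d)) :
    (c = one ∧ d = one) ∨ (u = one ∧ (c = one ∨ d = one)) := by
  have hb := congrArg breadth h
  simp only [breadth_brk, breadth_mul] at hb
  simp only [← breadth_eq_zero]
  omega

theorem brk_ne_mul {v c r : OpWord Z} (hc : c ≠ one) (hr : r ≠ one) : brk v ≠ c.mul r := by
  intro h
  have hb := congrArg breadth h
  simp only [breadth_brk, breadth_mul] at hb
  have := one_le_breadth hc
  have := one_le_breadth hr
  omega

/-- The relative position of the occurrences of `u₁` and `u₂` in `a₁ u₁ b₁ = a₂ u₂ b₂`: one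
inside the other, one before the other, or properly overlapping. -/
def OccurrenceCases (a₁ u₁ b₁ a₂ u₂ b₂ : OpWord Z) : Prop :=
  (∃ c d, a₂ = a₁.mul c ∧ u₁ = c.mul (u₂.mul d) ∧ b₂ = d.mul b₁) ∨
  (∃ c d, a₁ = a₂.mul c ∧ u₂ = c.mul (u₁.mul d) ∧ b₁ = d.mul b₂) ∨
  (∃ m, a₂ = a₁.mul (u₁.mul m) ∧ b₁ = m.mul (u₂.mul b₂)) ∨
  (∃ m, a₁ = a₂.mul (u₂.mul m) ∧ b₂ = m.mul (u₁.mul b₁)) ∨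
  (∃ c r d, c ≠ one ∧ r ≠ one ∧ d ≠ one ∧
    u₁ = c.mul r ∧ u₂ = r.mul d ∧ a₂ = a₁.mul c ∧ b₁ = d.mul b₂) ∨
  (∃ c r d, c ≠ one ∧ r ≠ one ∧ d ≠ one ∧
    u₂ = c.mul r ∧ u₁ = r.mul d ∧ a₁ = a₂.mul c ∧ b₂ = d.mul b₁)

theorem OccurrenceCases.symm {a₁ u₁ b₁ a₂ u₂ b₂ : OpWord Z}
    (h : OccurrenceCases a₁ u₁ b₁ a₂ u₂ b₂) : OccurrenceCases a₂ u₂ b₂ a₁ u₁ b₁ := by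
  rcases h with h | h | h | h | h | h
  · exact Or.inr (Or.inl h)
  · exact Or.inl h
  · exact Or.inr (Or.inr (Or.inr (Or.inl h)))
  · exact Or.inr (Or.inr (Or.inl h))
  · exact Or.inr (Or.inr (Or.inr (Or.inr (Or.inr h))))
  · exact Or.inr (Or.inr (Or.inr (Or.inr (Or.inl h))))

theorem occurrenceCases_of_prefix {a₁ u₁ b₁ a₂ u₂ b₂ w : OpWord Z}
    (ha₂ : a₂ = a₁.mul w) (h : u₁.mul b₁ = w.mul (u₂.mul b₂)) :
    OccurrenceCases a₁ u₁ b₁ a₂ u₂ b₂ := by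
  rcases levi h with ⟨m, rfl, hb₁⟩ | ⟨w', hu₁, h'⟩
  · exact Or.inr (Or.inr (Or.inl ⟨m, ha₂, hb₁⟩))
  rcases levi h' with ⟨d, hw', hb₂⟩ | ⟨d, hu₂, hb₁⟩
  · exact Or.inl ⟨w, d, ha₂, by rw [hu₁, hw'], hb₂⟩
  by_cases hw : w = one
  · subst hw
    refine Or.inr (Or.inl ⟨one, d, ?_, ?_, hb₁⟩)
    · rw [ha₂, mul_one, mul_one]
    · rw [one_mul, hu₂, hu₁, one_mul]
  by_cases hd : d = one
  · subst hd
    refine Or.inl ⟨w, one, ha₂, ?_, ?_⟩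
    · rw [hu₁, hu₂, mul_one, mul_one]
    · rw [hb₁, one_mul, one_mul]
  by_cases hw' : w' = one
  · subst hw'
    refine Or.inr (Or.inr (Or.inl ⟨one, ?_, ?_⟩))
    · rw [mul_one, hu₁, mul_one]; exact ha₂
    · rw [one_mul, hb₁, hu₂, one_mul]
  exact Or.inr (Or.inr (Or.inr (Or.inr (Or.inl ⟨w, w', d, hw, hw', hd, hu₁, hu₂, ha₂, hb₁⟩))))

theorem occurrenceCases_of_eq {a₁ u₁ b₁ a₂ u₂ b₂ : OpWord Z}
    (h : a₁.mul (u₁.mul b₁) = a₂.mul (u₂.mul b₂)) :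
    OccurrenceCases a₁ u₁ b₁ a₂ u₂ b₂ := by
  rcases levi h with ⟨w, ha₂, h'⟩ | ⟨w, ha₁, h'⟩
  · exact occurrenceCases_of_prefix ha₂ h'
  · exact (occurrenceCases_of_prefix ha₁ h').symm

end OpWord

namespace StarWord

variable {Z : Type}

def comp : StarWord Z → StarWord Z → StarWord Z
  | star, p => p
  | brk q, p => brk (q.comp p)
  | mul a q b, p => mul a (q.comp p) b

theorem subst_comp (q p : StarWord Z) (u : OpWord Z) :
    (q.comp p).subst u = q.subst (p.subst u) := by
  induction q with
  | star => rfl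
  | brk q ih => simp [comp, subst, ih]
  | mul a q b ih => simp [comp, subst, ih]

theorem exists_frame (q : StarWord Z) :
    (∃ (a b : OpWord Z), ∀ x, q.subst x = a.mul (x.mul b)) ∨
    (∃ (a b : OpWord Z) (q' : StarWord Z), sizeOf q' < sizeOf q ∧
      ∀ x, q.subst x = a.mul ((OpWord.brk (q'.subst x)).mul b)) := by
  induction q with
  | star =>
    refine Or.inl ⟨OpWord.one, OpWord.one, fun x => ?_⟩
    rw [OpWord.one_mul, OpWord.mul_one]; rfl
  | brk q _ =>
    refine Or.inr ⟨OpWord.one, OpWord.one, q, by simp, fun x => ?_⟩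
    rw [OpWord.one_mul, OpWord.mul_one]; rfl
  | mul a q b ih =>
    rcases ih with ⟨a', b', hq⟩ | ⟨a', b', q', hs, hq⟩
    · refine Or.inl ⟨a.mul a', b'.mul b, fun x => ?_⟩
      show a.mul ((q.subst x).mul b) = _
      rw [hq x, OpWord.mul_assoc, OpWord.mul_assoc, OpWord.mul_assoc]
    · refine Or.inr ⟨a.mul a', b'.mul b, q', by simp; omega, fun x => ?_⟩
      show a.mul ((q.subst x).mul b) = _
      rw [hq x, OpWord.mul_assoc, OpWord.mul_assoc, OpWord.mul_assoc]

def Nested (q₁ : StarWord Z) (u₁ : OpWord Z) (q₂ : StarWord Z) (u₂ : OpWord Z) : Prop :=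
  ∃ p : StarWord Z, u₁ = p.subst u₂ ∧ ∀ x, q₂.subst x = q₁.subst (p.subst x)

/-- `g` is a context with two holes, and each hole alone is a star word. -/
def Separated (q₁ : StarWord Z) (u₁ : OpWord Z) (q₂ : StarWord Z) (u₂ : OpWord Z) : Prop :=
  ∃ g : OpWord Z → OpWord Z → OpWord Z,
    (∀ y, ∃ qy : StarWord Z, ∀ x, g x y = qy.subst x) ∧
    (∀ x, ∃ qx : StarWord Z, ∀ y, g x y = qx.subst y) ∧
    (∀ x, q₁.subst x = g x u₂) ∧ (∀ y, q₂.subst y = g u₁ y)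

def Overlapping (q₁ : StarWord Z) (u₁ : OpWord Z) (q₂ : StarWord Z) (u₂ : OpWord Z) : Prop :=
  ∃ (Q : StarWord Z) (c r d : OpWord Z), c ≠ OpWord.one ∧ r ≠ OpWord.one ∧ d ≠ OpWord.one ∧
    u₁ = c.mul r ∧ u₂ = r.mul d ∧
    (∀ x, q₁.subst x = Q.subst (x.mul d)) ∧ (∀ y, q₂.subst y = Q.subst (c.mul y))

def OccurrenceCases (q₁ : StarWord Z) (u₁ : OpWord Z) (q₂ : StarWord Z) (u₂ : OpWord Z) :
    Prop :=
  Nested q₁ u₁ q₂ u₂ ∨ Nested q₂ u₂ q₁ u₁ ∨ Separated q₁ u₁ q₂ u₂ ∨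
    Overlapping q₁ u₁ q₂ u₂ ∨ Overlapping q₂ u₂ q₁ u₁

theorem Separated.symm {q₁ q₂ : StarWord Z} {u₁ u₂ : OpWord Z}
    (h : Separated q₁ u₁ q₂ u₂) : Separated q₂ u₂ q₁ u₁ :=
  let ⟨g, hy, hx, h₁, h₂⟩ := h
  ⟨fun y x => g x y, hx, hy, h₂, h₁⟩

theorem OccurrenceCases.symm {q₁ q₂ : StarWord Z} {u₁ u₂ : OpWord Z}
    (h : OccurrenceCases q₁ u₁ q₂ u₂) : OccurrenceCases q₂ u₂ q₁ u₁ := by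
  rcases h with h | h | h | h | h
  · exact Or.inr (Or.inl h)
  · exact Or.inl h
  · exact Or.inr (Or.inr (Or.inl h.symm))
  · exact Or.inr (Or.inr (Or.inr (Or.inr h)))
  · exact Or.inr (Or.inr (Or.inr (Or.inl h)))

theorem occurrenceCases_mul_mul {q₁ q₂ : StarWord Z} {u₁ u₂ a₁ b₁ a₂ b₂ : OpWord Z}
    (hq₁ : ∀ x, q₁.subst x = a₁.mul (x.mul b₁))
    (hq₂ : ∀ x, q₂.subst x = a₂.mul (x.mul b₂))
    (h : q₁.subst u₁ = q₂.subst u₂) : OccurrenceCases q₁ u₁ q₂ u₂ := by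
  rw [hq₁, hq₂] at h
  rcases OpWord.occurrenceCases_of_eq h with
    ⟨c, d, ha, hu, hb⟩ | ⟨c, d, ha, hu, hb⟩ | ⟨m, ha, hb⟩ | ⟨m, ha, hb⟩ |
    ⟨c, r, d, hc, hr, hd, hu1, hu2, ha, hb⟩ | ⟨c, r, d, hc, hr, hd, hu1, hu2, ha, hb⟩
  · refine Or.inl ⟨StarWord.mul c StarWord.star d, by simp [subst, hu], fun x => ?_⟩
    simp only [hq₁, hq₂, subst, ha, hb, OpWord.mul_assoc]
  · refine Or.inr (Or.inl ⟨StarWord.mul c StarWord.star d, by simp [subst, hu], fun x => ?_⟩)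
    simp only [hq₁, hq₂, subst, ha, hb, OpWord.mul_assoc]
  · refine Or.inr (Or.inr (Or.inl ⟨fun x y => a₁.mul (x.mul (m.mul (y.mul b₂))),
      fun y => ⟨StarWord.mul a₁ StarWord.star (m.mul (y.mul b₂)), fun x => ?_⟩,
      fun x => ⟨StarWord.mul (a₁.mul (x.mul m)) StarWord.star b₂, fun y => ?_⟩,
      fun x => ?_, fun y => ?_⟩)) <;>
    simp only [hq₁, hq₂, subst, ha, hb, OpWord.mul_assoc]
  · refine Or.inr (Or.inr (Or.inl ⟨fun x y => a₂.mul (y.mul (m.mul (x.mul b₁))),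
      fun y => ⟨StarWord.mul (a₂.mul (y.mul m)) StarWord.star b₁, fun x => ?_⟩,
      fun x => ⟨StarWord.mul a₂ StarWord.star (m.mul (x.mul b₁)), fun y => ?_⟩,
      fun x => ?_, fun y => ?_⟩)) <;>
    simp only [hq₁, hq₂, subst, ha, hb, OpWord.mul_assoc]
  · refine Or.inr (Or.inr (Or.inr (Or.inl ⟨StarWord.mul a₁ StarWord.star b₂, c, r, d,
      hc, hr, hd, hu1, hu2, fun x => ?_, fun y => ?_⟩))) <;>
    simp only [hq₁, hq₂, subst, ha, hb, OpWord.mul_assoc]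
  · refine Or.inr (Or.inr (Or.inr (Or.inr ⟨StarWord.mul a₂ StarWord.star b₁, c, r, d,
      hc, hr, hd, hu1, hu2, fun y => ?_, fun x => ?_⟩))) <;>
    simp only [hq₁, hq₂, subst, ha, hb, OpWord.mul_assoc]

/-- `u₁` is a factor of the single letter `⌊q₂'|_{u₂}⌋`, so it is that letter or empty. -/
theorem occurrenceCases_mul_brk_of_brk_eq {q₁ q₂ q₂' : StarWord Z}
    {u₁ u₂ a₁ b₁ a₂ b₂ c d : OpWord Z}
    (hq₁ : ∀ x, q₁.subst x = a₁.mul (x.mul b₁))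
    (hq₂ : ∀ x, q₂.subst x = a₂.mul ((OpWord.brk (q₂'.subst x)).mul b₂))
    (ha : a₁ = a₂.mul c) (hu : OpWord.brk (q₂'.subst u₂) = c.mul (u₁.mul d))
    (hb : b₁ = d.mul b₂) : OccurrenceCases q₁ u₁ q₂ u₂ := by
  rcases OpWord.brk_eq_mul_mul hu with ⟨rfl, rfl⟩ | ⟨rfl, rfl | rfl⟩ <;>
    simp only [OpWord.one_mul, OpWord.mul_one] at hu
  · refine Or.inl ⟨StarWord.brk q₂', hu.symm, fun x => ?_⟩
    simp only [hq₁, hq₂, subst, ha, hb, OpWord.mul_one, OpWord.one_mul]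
  · subst hu
    refine Or.inr (Or.inr (Or.inl
      ⟨fun x y => a₂.mul (x.mul ((OpWord.brk (q₂'.subst y)).mul b₂)),
      fun y => ⟨StarWord.mul a₂ StarWord.star ((OpWord.brk (q₂'.subst y)).mul b₂),
        fun x => ?_⟩,
      fun x => ⟨StarWord.mul (a₂.mul x) (StarWord.brk q₂') b₂, fun y => ?_⟩,
      fun x => ?_, fun y => ?_⟩)) <;>
    simp only [hq₁, hq₂, subst, ha, hb, OpWord.mul_assoc, OpWord.mul_one, OpWord.one_mul]
  · subst hu
    refine Or.inr (Or.inr (Or.inl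
      ⟨fun x y => a₂.mul ((OpWord.brk (q₂'.subst y)).mul (x.mul b₂)),
      fun y => ⟨StarWord.mul (a₂.mul (OpWord.brk (q₂'.subst y))) StarWord.star b₂,
        fun x => ?_⟩,
      fun x => ⟨StarWord.mul a₂ (StarWord.brk q₂') (x.mul b₂), fun y => ?_⟩,
      fun x => ?_, fun y => ?_⟩)) <;>
    simp only [hq₁, hq₂, subst, ha, hb, OpWord.mul_assoc, OpWord.one_mul]

theorem occurrenceCases_mul_brk {q₁ q₂ q₂' : StarWord Z} {u₁ u₂ a₁ b₁ a₂ b₂ : OpWord Z}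
    (hq₁ : ∀ x, q₁.subst x = a₁.mul (x.mul b₁))
    (hq₂ : ∀ x, q₂.subst x = a₂.mul ((OpWord.brk (q₂'.subst x)).mul b₂))
    (h : q₁.subst u₁ = q₂.subst u₂) : OccurrenceCases q₁ u₁ q₂ u₂ := by
  rw [hq₁, hq₂] at h
  rcases OpWord.occurrenceCases_of_eq h with
    ⟨c, d, ha, hu, hb⟩ | ⟨c, d, ha, hu, hb⟩ | ⟨m, ha, hb⟩ | ⟨m, ha, hb⟩ |
    ⟨c, r, d, -, hr, hd, -, hu, -, -⟩ | ⟨c, r, d, hc, hr, -, hu, -, -, -⟩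
  · refine Or.inl ⟨StarWord.mul c (StarWord.brk q₂') d, by simp [subst, hu], fun x => ?_⟩
    simp only [hq₁, hq₂, subst, ha, hb, OpWord.mul_assoc]
  · exact occurrenceCases_mul_brk_of_brk_eq hq₁ hq₂ ha hu hb
  · refine Or.inr (Or.inr (Or.inl
      ⟨fun x y => a₁.mul (x.mul (m.mul ((OpWord.brk (q₂'.subst y)).mul b₂))),
      fun y => ⟨StarWord.mul a₁ StarWord.star (m.mul ((OpWord.brk (q₂'.subst y)).mul b₂)),
        fun x => ?_⟩,
      fun x => ⟨StarWord.mul (a₁.mul (x.mul m)) (StarWord.brk q₂') b₂, fun y => ?_⟩,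
      fun x => ?_, fun y => ?_⟩)) <;>
    simp only [hq₁, hq₂, subst, ha, hb, OpWord.mul_assoc]
  · refine Or.inr (Or.inr (Or.inl
      ⟨fun x y => a₂.mul ((OpWord.brk (q₂'.subst y)).mul (m.mul (x.mul b₁))),
      fun y => ⟨StarWord.mul (a₂.mul ((OpWord.brk (q₂'.subst y)).mul m)) StarWord.star b₁,
        fun x => ?_⟩,
      fun x => ⟨StarWord.mul a₂ (StarWord.brk q₂') (m.mul (x.mul b₁)), fun y => ?_⟩,
      fun x => ?_, fun y => ?_⟩)) <;>
    simp only [hq₁, hq₂, subst, ha, hb, OpWord.mul_assoc]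
  · exact absurd hu (OpWord.brk_ne_mul hr hd)
  · exact absurd hu (OpWord.brk_ne_mul hc hr)

/-- Either the two bracket letters are separated, or they are the same letter and the
comparison continues inside it. -/
theorem occurrenceCases_brk_brk {q₁ q₂ q₁' q₂' : StarWord Z} {u₁ u₂ a₁ b₁ a₂ b₂ : OpWord Z}
    (hq₁ : ∀ x, q₁.subst x = a₁.mul ((OpWord.brk (q₁'.subst x)).mul b₁))
    (hq₂ : ∀ x, q₂.subst x = a₂.mul ((OpWord.brk (q₂'.subst x)).mul b₂))
    (h : q₁.subst u₁ = q₂.subst u₂) :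
    OccurrenceCases q₁ u₁ q₂ u₂ ∨ (q₁'.subst u₁ = q₂'.subst u₂ ∧ a₂ = a₁ ∧ b₂ = b₁) := by
  rw [hq₁, hq₂] at h
  rcases OpWord.occurrenceCases_of_eq h with
    ⟨c, d, ha, hu, hb⟩ | ⟨c, d, ha, hu, hb⟩ | ⟨m, ha, hb⟩ | ⟨m, ha, hb⟩ |
    ⟨c, r, d, -, hr, hd, -, hu, -, -⟩ | ⟨c, r, d, -, hr, hd, -, hu, -, -⟩
  · rcases OpWord.brk_eq_mul_mul hu with ⟨rfl, rfl⟩ | ⟨hone, -⟩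
    · exact Or.inr ⟨OpWord.brk_injective hu, by rw [ha, OpWord.mul_one], hb⟩
    · exact absurd hone (OpWord.brk_ne_one _)
  · rcases OpWord.brk_eq_mul_mul hu with ⟨rfl, rfl⟩ | ⟨hone, -⟩
    · exact Or.inr ⟨(OpWord.brk_injective hu).symm, by rw [ha, OpWord.mul_one], hb.symm⟩
    · exact absurd hone (OpWord.brk_ne_one _)
  · refine Or.inl (Or.inr (Or.inr (Or.inl
      ⟨fun x y => a₁.mul ((OpWord.brk (q₁'.subst x)).mul
        (m.mul ((OpWord.brk (q₂'.subst y)).mul b₂))),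
      fun y => ⟨StarWord.mul a₁ (StarWord.brk q₁')
        (m.mul ((OpWord.brk (q₂'.subst y)).mul b₂)), fun x => ?_⟩,
      fun x => ⟨StarWord.mul (a₁.mul ((OpWord.brk (q₁'.subst x)).mul m))
        (StarWord.brk q₂') b₂, fun y => ?_⟩,
      fun x => ?_, fun y => ?_⟩))) <;>
    simp only [hq₁, hq₂, subst, ha, hb, OpWord.mul_assoc]
  · refine Or.inl (Or.inr (Or.inr (Or.inl
      ⟨fun x y => a₂.mul ((OpWord.brk (q₂'.subst y)).mul
        (m.mul ((OpWord.brk (q₁'.subst x)).mul b₁))),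
      fun y => ⟨StarWord.mul (a₂.mul ((OpWord.brk (q₂'.subst y)).mul m))
        (StarWord.brk q₁') b₁, fun x => ?_⟩,
      fun x => ⟨StarWord.mul a₂ (StarWord.brk q₂')
        (m.mul ((OpWord.brk (q₁'.subst x)).mul b₁)), fun y => ?_⟩,
      fun x => ?_, fun y => ?_⟩))) <;>
    simp only [hq₁, hq₂, subst, ha, hb, OpWord.mul_assoc]
  · exact absurd hu (OpWord.brk_ne_mul hr hd)
  · exact absurd hu (OpWord.brk_ne_mul hr hd)

theorem OccurrenceCases.lift {q₁ q₂ q₁' q₂' : StarWord Z} {u₁ u₂ a b : OpWord Z}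
    (hq₁ : ∀ x, q₁.subst x = a.mul ((OpWord.brk (q₁'.subst x)).mul b))
    (hq₂ : ∀ x, q₂.subst x = a.mul ((OpWord.brk (q₂'.subst x)).mul b))
    (hcl : OccurrenceCases q₁' u₁ q₂' u₂) : OccurrenceCases q₁ u₁ q₂ u₂ := by
  set Qout : StarWord Z := StarWord.mul a (StarWord.brk StarWord.star) b
  have hout1 : ∀ x, q₁.subst x = Qout.subst (q₁'.subst x) := fun x => hq₁ x
  have hout2 : ∀ x, q₂.subst x = Qout.subst (q₂'.subst x) := fun x => hq₂ x
  rcases hcl with ⟨p, hu, hp⟩ | ⟨p, hu, hp⟩ | ⟨g, hy, hx, h1, h2⟩ |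
    ⟨Q, c, r, d, hc, hr, hd, hu1, hu2, hA, hB⟩ | ⟨Q, c, r, d, hc, hr, hd, hu1, hu2, hA, hB⟩
  · refine Or.inl ⟨p, hu, fun x => ?_⟩
    rw [hout2, hp x, ← hout1]
  · refine Or.inr (Or.inl ⟨p, hu, fun x => ?_⟩)
    rw [hout1, hp x, ← hout2]
  · refine Or.inr (Or.inr (Or.inl ⟨fun x y => Qout.subst (g x y),
      fun y => ?_, fun x => ?_, fun x => by rw [hout1, h1 x], fun y => by rw [hout2, h2 y]⟩))
    · obtain ⟨qy, hqy⟩ := hy y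
      exact ⟨Qout.comp qy, fun x => by show Qout.subst (g x y) = _; rw [subst_comp, hqy x]⟩
    · obtain ⟨qx, hqx⟩ := hx x
      exact ⟨Qout.comp qx, fun y => by show Qout.subst (g x y) = _; rw [subst_comp, hqx y]⟩
  · refine Or.inr (Or.inr (Or.inr (Or.inl ⟨Qout.comp Q, c, r, d, hc, hr, hd, hu1, hu2,
      fun x => ?_, fun y => ?_⟩)))
    · rw [hout1, hA x, subst_comp]
    · rw [hout2, hB y, subst_comp]
  · refine Or.inr (Or.inr (Or.inr (Or.inr ⟨Qout.comp Q, c, r, d, hc, hr, hd, hu1, hu2,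
      fun y => ?_, fun x => ?_⟩)))
    · rw [hout2, hA y, subst_comp]
    · rw [hout1, hB x, subst_comp]

theorem occurrenceCases_of_subst_eq {q₁ q₂ : StarWord Z} {u₁ u₂ : OpWord Z}
    (h : q₁.subst u₁ = q₂.subst u₂) : OccurrenceCases q₁ u₁ q₂ u₂ := by
  induction hn : sizeOf q₁ using Nat.strong_induction_on generalizing q₁ q₂ with
  | _ n ih =>
  rcases exists_frame q₁ with ⟨a₁, b₁, h₁⟩ | ⟨a₁, b₁, q₁', hs₁, h₁⟩ <;>
    rcases exists_frame q₂ with ⟨a₂, b₂, h₂⟩ | ⟨a₂, b₂, q₂', -, h₂⟩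
  · exact occurrenceCases_mul_mul h₁ h₂ h
  · exact occurrenceCases_mul_brk h₁ h₂ h
  · exact (occurrenceCases_mul_brk h₂ h₁ h.symm).symm
  · rcases occurrenceCases_brk_brk h₁ h₂ h with hcl | ⟨hv, ha, hb⟩
    · exact hcl
    · exact OccurrenceCases.lift h₁ (fun x => by rw [h₂ x, ha, hb]) (ih _ (hn ▸ hs₁) hv rfl)

end StarWord

namespace IsMonomialOrder

variable {Z : Type} {lt : OpWord Z → OpWord Z → Prop}

theorem trans (hlt : IsMonomialOrder lt) {a b c : OpWord Z} (hab : lt a b) (hbc : lt b c) :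
    lt a c := by
  have := hlt.wellOrder
  exact trans_of lt hab hbc

theorem irrefl (hlt : IsMonomialOrder lt) (a : OpWord Z) : ¬ lt a a := by
  have := hlt.wellOrder
  exact irrefl_of lt a

theorem asymm (hlt : IsMonomialOrder lt) {a b : OpWord Z} (hab : lt a b) : ¬ lt b a :=
  fun hba => hlt.irrefl a (hlt.trans hab hba)

theorem trichotomous (hlt : IsMonomialOrder lt) (a b : OpWord Z) :
    lt a b ∨ a = b ∨ lt b a := by
  have := hlt.wellOrder
  exact trichotomous_of lt a b

variable {k : Type} [Field k]

theorem isLeadingMonomial_unique (hlt : IsMonomialOrder lt) {f : kM k Z} {w w' : OpWord Z}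
    (h : IsLeadingMonomial lt f w) (h' : IsLeadingMonomial lt f w') : w = w' := by
  by_contra hne
  exact hlt.asymm (h.2 w' h'.1 (Ne.symm hne)) (h'.2 w h.1 hne)

theorem exists_isLeadingMonomial (hlt : IsMonomialOrder lt) {f : kM k Z} (hf : f ≠ 0) :
    ∃ w, IsLeadingMonomial lt f w := by
  have := hlt.wellOrder
  let := IsWellOrder.linearOrder lt
  obtain ⟨w, hw, hmax⟩ := f.support.exists_max_image id (Finsupp.support_nonempty_iff.2 hf)
  exact ⟨w, hw, fun w' hw' hne => lt_of_le_of_ne (hmax w' hw') hne⟩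

end IsMonomialOrder

namespace StarWord

variable {k Z : Type} [Field k]

theorem substF_sub (q : StarWord Z) (a b : kM k Z) :
    q.substF (a - b) = q.substF a - q.substF b :=
  Finsupp.mapDomain_sub

theorem substF_single_s11 (q : StarWord Z) (w : OpWord Z) (c : k) :
    q.substF (Finsupp.single w c) = Finsupp.single (q.subst w) c :=
  Finsupp.mapDomain_single

theorem substF_star (f : kM k Z) : star.substF f = f :=
  Finsupp.mapDomain_id

theorem substF_comp (q p : StarWord Z) (s : kM k Z) :
    (q.comp p).substF s = q.substF (p.substF s) := by
  rw [substF, substF, substF, ← Finsupp.mapDomain_comp]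
  exact congrArg (Finsupp.mapDomain · s) (funext (subst_comp q p))

theorem substF_congr {q q' : StarWord Z} (hq : ∀ x, q.subst x = q'.subst x) (s : kM k Z) :
    q.substF s = q'.substF s :=
  congrArg (Finsupp.mapDomain · s) (funext hq)

end StarWord

theorem mulWordRight_eq_substF {k Z : Type} [Field k] (f : kM k Z) (u : OpWord Z) :
    mulWordRight f u = (StarWord.mul .one .star u).substF f := rfl

theorem mulWordLeft_eq_substF {k Z : Type} [Field k] (v : OpWord Z) (g : kM k Z) :
    mulWordLeft v g = (StarWord.mul v .star .one).substF g :=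
  congrArg (Finsupp.mapDomain · g) (funext fun x => by simp [StarWord.subst, OpWord.mul_one])

theorem spanSet_eq_supported {k Z : Type} [Field k] (T : Set (OpWord Z)) :
    spanSet k T = Finsupp.supported k k T :=
  (Finsupp.supported_eq_span_single k T).symm

section Leading

variable {k Z : Type} [Field k] {lt : OpWord Z → OpWord Z → Prop}

theorem substF_mem_supported_lt (hlt : IsMonomialOrder lt) (q : StarWord Z) {w : OpWord Z}
    {f : kM k Z} (hf : f ∈ Finsupp.supported k k {x | lt x w}) :
    q.substF f ∈ Finsupp.supported k k {x | lt x (q.subst w)} := by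
  classical
  intro x hx
  obtain ⟨y, hy, rfl⟩ := Finset.mem_image.1 (Finsupp.mapDomain_support hx)
  exact hlt.compat q y w (hf hy)

theorem sub_single_mem_supported_lt {f : kM k Z} {w : OpWord Z}
    (hw : IsLeadingMonomial lt f w) (hf : f w = 1) :
    f - Finsupp.single w 1 ∈ Finsupp.supported k k {x | lt x w} := by
  intro x hx
  have hxw : x ≠ w := by
    rintro rfl
    simp [hf] at hx
  refine hw.2 x (Finsupp.mem_support_iff.2 fun h0 => ?_) hxw
  simp [h0, Finsupp.single_eq_of_ne hxw] at hx

theorem substF_sub_single_mem_supported_lt (hlt : IsMonomialOrder lt) {s : kM k Z}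
    {ws : OpWord Z} (hws : IsLeadingMonomial lt s ws) (hs : s ws = 1) (q : StarWord Z) :
    q.substF s - Finsupp.single (q.subst ws) 1 ∈
      Finsupp.supported k k {x | lt x (q.subst ws)} := by
  rw [← StarWord.substF_single_s11, ← StarWord.substF_sub]
  exact substF_mem_supported_lt hlt q (sub_single_mem_supported_lt hws hs)

theorem isLeadingMonomial_of_sub_smul_single_mem (hlt : IsMonomialOrder lt) {f : kM k Z}
    {w : OpWord Z} {c : k} (hc : c ≠ 0)
    (hf : f - c • Finsupp.single w 1 ∈ Finsupp.supported k k {x | lt x w}) :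
    IsLeadingMonomial lt f w := by
  have hfw : f w = c := by
    have := Finsupp.notMem_support_iff.1 fun h => hlt.irrefl w (hf h)
    simpa [sub_eq_zero] using this
  refine ⟨Finsupp.mem_support_iff.2 (hfw ▸ hc), fun x hx hxw => hf ?_⟩
  simpa [Finsupp.single_eq_of_ne hxw] using hx

theorem coeff_eq_one_of_monicized (hlt : IsMonomialOrder lt) {S : Set (kM k Z)}
    (hm : Monicized lt S) {s : kM k Z} (hs : s ∈ S) {w : OpWord Z}
    (hw : IsLeadingMonomial lt s w) : s w = 1 := by
  obtain ⟨w', hw', hsw'⟩ := hm s hs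
  rwa [hlt.isLeadingMonomial_unique hw hw']

theorem monicVersion_eq (hlt : IsMonomialOrder lt) {S : Set (kM k Z)} (hm : Monicized lt S) :
    MonicVersion lt S = S := by
  ext f
  constructor
  · rintro ⟨s, hs, w, hw, rfl⟩
    rwa [coeff_eq_one_of_monicized hlt hm hs hw, inv_one, one_smul]
  · intro hf
    obtain ⟨w, hw, hfw⟩ := hm f hf
    exact ⟨f, hf, w, hw, by rw [hfw, inv_one, one_smul]⟩

end Leading

section Rewriting

variable {k W : Type} [Field k] {R : Set (W × (W →₀ k))}

theorem oneStep_iff {f g : W →₀ k} :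
    OneStep R f g ↔ ∃ t v, (t, v) ∈ R ∧ f t ≠ 0 ∧ g = f - f t • (Finsupp.single t 1 - v) := by
  constructor
  · rintro ⟨c, t, v, f', hc, hr, ht, rfl, rfl⟩
    have hft : (Finsupp.single t c + f') t = c := by
      simp [Finsupp.notMem_support_iff.1 ht]
    refine ⟨t, v, hr, by rwa [hft], ?_⟩
    rw [hft, smul_sub, Finsupp.smul_single_one]
    abel
  · rintro ⟨t, v, hr, hft, rfl⟩
    refine ⟨f t, t, v, f - Finsupp.single t (f t), hft, hr, by simp, by abel, ?_⟩
    rw [smul_sub, Finsupp.smul_single_one]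
    abel

theorem rewrites_sub_smul {t : W} {v : W →₀ k} (hr : (t, v) ∈ R) (f : W →₀ k) :
    Rewrites R f (f - f t • (Finsupp.single t 1 - v)) := by
  by_cases hft : f t = 0
  · rw [hft, zero_smul, sub_zero]
    exact .refl
  · exact .single (oneStep_iff.2 ⟨t, v, hr, hft, rfl⟩)

theorem joinable_add_smul_sub {t : W} {v : W →₀ k} (hr : (t, v) ∈ R) (hvt : v t = 0)
    (f : W →₀ k) (c : k) : Joinable R (f + c • (Finsupp.single t 1 - v)) f := by
  refine ⟨f - f t • (Finsupp.single t 1 - v), ?_, rewrites_sub_smul hr f⟩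
  convert rewrites_sub_smul hr (f + c • (Finsupp.single t 1 - v)) using 1
  simp only [Finsupp.add_apply, Finsupp.smul_apply, Finsupp.sub_apply, Finsupp.single_eq_same,
    hvt, sub_zero, smul_eq_mul, mul_one, add_smul]
  abel

theorem Joinable.trans (hc : Confluent R) {a b c : W →₀ k} :
    Joinable R a b → Joinable R b c → Joinable R a c := by
  rintro ⟨u, hau, hbu⟩ ⟨w, hbw, hcw⟩
  obtain ⟨x, hux, hwx⟩ := hc hbu hbw
  exact ⟨x, hau.trans hux, hcw.trans hwx⟩

theorem eq_zero_of_rewrites_zero {g : W →₀ k} (h : Rewrites R 0 g) : g = 0 := by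
  induction h with
  | refl => rfl
  | tail _ hstep ih =>
    obtain ⟨t, -, -, ht, -⟩ := oneStep_iff.1 hstep
    exact absurd (by rw [ih]; rfl) ht

theorem terminating_of_wellFounded (h : WellFounded (flip (OneStep R))) : Terminating R :=
  fun ⟨seq, hseq⟩ => (wellFounded_iff_isEmpty_descending_chain.1 h).false ⟨seq, hseq⟩

end Rewriting

section PiS

variable {k Z : Type} [Field k] {lt : OpWord Z → OpWord Z → Prop} {S : Set (kM k Z)}

theorem substF_Rrem {s : kM k Z} {w : OpWord Z} (hs : s w = 1) (q : StarWord Z) :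
    q.substF (Rrem s w) = Finsupp.single (q.subst w) 1 - q.substF s := by
  rw [Rrem, hs, inv_one, one_smul, StarWord.substF_sub, StarWord.substF_single_s11]

theorem notMem_irrSet_iff {t : OpWord Z} : t ∉ IrrSet lt S ↔ ∃ v, (t, v) ∈ PiS lt S := by
  simp only [IrrSet, Set.mem_ofPred_eq, not_not]
  constructor
  · rintro ⟨s, hs, w, hw, q, rfl⟩
    exact ⟨_, s, hs, w, hw, q, rfl⟩
  · rintro ⟨v, s, hs, w, hw, q, hq⟩
    exact ⟨s, hs, w, hw, q, congrArg Prod.fst hq⟩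

variable (hlt : IsMonomialOrder lt) (hm : Monicized lt S)
include hlt hm

theorem mem_PiS {s : kM k Z} (hs : s ∈ S) {w : OpWord Z} (hw : IsLeadingMonomial lt s w)
    (q : StarWord Z) : (q.subst w, Finsupp.single (q.subst w) 1 - q.substF s) ∈ PiS lt S :=
  ⟨s, hs, w, hw, q, by rw [substF_Rrem (coeff_eq_one_of_monicized hlt hm hs hw)]⟩

theorem exists_of_mem_PiS {t : OpWord Z} {v : kM k Z} (hr : (t, v) ∈ PiS lt S) :
    ∃ s ∈ S, ∃ w, IsLeadingMonomial lt s w ∧ ∃ q : StarWord Z,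
      t = q.subst w ∧ Finsupp.single t 1 - v = q.substF s := by
  obtain ⟨s, hs, w, hw, q, hq⟩ := hr
  obtain ⟨rfl, rfl⟩ := Prod.mk.inj hq
  refine ⟨s, hs, w, hw, q, rfl, ?_⟩
  rw [substF_Rrem (coeff_eq_one_of_monicized hlt hm hs hw), sub_sub_cancel]

theorem snd_mem_supported_lt_of_mem_PiS {t : OpWord Z} {v : kM k Z}
    (hr : (t, v) ∈ PiS lt S) : v ∈ Finsupp.supported k k {x | lt x t} := by
  obtain ⟨s, hs, w, hw, q, rfl, hv⟩ := exists_of_mem_PiS hlt hm hr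
  have := substF_sub_single_mem_supported_lt hlt hw (coeff_eq_one_of_monicized hlt hm hs hw) q
  rw [← hv, sub_sub_cancel_left] at this
  simpa using Submodule.neg_mem _ this

theorem snd_apply_fst_of_mem_PiS {t : OpWord Z} {v : kM k Z} (hr : (t, v) ∈ PiS lt S) :
    v t = 0 :=
  Finsupp.notMem_support_iff.1 fun h => hlt.irrefl t (snd_mem_supported_lt_of_mem_PiS hlt hm hr h)

theorem wellFounded_oneStep : WellFounded (flip (OneStep (PiS lt S))) := by
  have h0 : Acc (fun a b : k => a = 0 ∧ b ≠ 0) 0 := Acc.intro 0 fun _ h => absurd rfl h.2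
  have hk : WellFounded (fun a b : k => a = 0 ∧ b ≠ 0) :=
    ⟨fun b => Acc.intro b fun a ⟨ha, _⟩ => ha ▸ h0⟩
  have : Std.Trichotomous (Function.swap lt) :=
    ⟨fun a b hab hba => ((hlt.trichotomous a b).resolve_left hba).resolve_right hab⟩
  refine Subrelation.wf (fun {g f} h => ?_)
    (Finsupp.Lex.wellFounded' (fun _ h => h.2 rfl) hk hlt.wellOrder.wf)
  obtain ⟨t, v, hr, hft, rfl⟩ := oneStep_iff.1 h
  have hv := snd_mem_supported_lt_of_mem_PiS hlt hm hr
  refine ⟨t, fun x hx => ?_, by simp [snd_apply_fst_of_mem_PiS hlt hm hr], hft⟩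
  have hxt : x ≠ t := fun h => hlt.irrefl t (h ▸ hx)
  have hvx : v x = 0 := Finsupp.notMem_support_iff.1 fun h => hlt.asymm hx (hv h)
  simp [Finsupp.single_eq_of_ne hxt, hvx]

theorem terminating_PiS : Terminating (PiS lt S) :=
  terminating_of_wellFounded (wellFounded_oneStep hlt hm)

end PiS

section NormalForms

variable {k Z : Type} [Field k] {lt : OpWord Z → OpWord Z → Prop} {S : Set (kM k Z)}

theorem not_oneStep_of_mem_spanSet_irrSet {f g : kM k Z} (hf : f ∈ spanSet k (IrrSet lt S)) :
    ¬ OneStep (PiS lt S) f g := fun hstep => by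
  obtain ⟨t, v, hr, hft, -⟩ := oneStep_iff.1 hstep
  rw [spanSet_eq_supported] at hf
  exact notMem_irrSet_iff.2 ⟨v, hr⟩ (hf (Finsupp.mem_support_iff.2 hft))

theorem eq_of_rewrites_of_mem_spanSet_irrSet {f g : kM k Z}
    (hf : f ∈ spanSet k (IrrSet lt S)) (h : Rewrites (PiS lt S) f g) : f = g := by
  rcases h.cases_head with hfg | ⟨_, hstep, -⟩
  · exact hfg
  · exact absurd hstep (not_oneStep_of_mem_spanSet_irrSet hf)

variable (hlt : IsMonomialOrder lt) (hm : Monicized lt S)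
include hlt hm

theorem exists_rewrites_mem_spanSet_irrSet (f : kM k Z) :
    ∃ g, Rewrites (PiS lt S) f g ∧ g ∈ spanSet k (IrrSet lt S) := by
  induction f using (wellFounded_oneStep hlt hm).induction with
  | _ f ih =>
  by_cases hf : f ∈ spanSet k (IrrSet lt S)
  · exact ⟨f, .refl, hf⟩
  rw [spanSet_eq_supported, Finsupp.mem_supported] at hf
  obtain ⟨t, ht, htirr⟩ := Set.not_subset.1 hf
  obtain ⟨v, hr⟩ := notMem_irrSet_iff.1 htirr
  have hstep := oneStep_iff.2 ⟨t, v, hr, Finsupp.mem_support_iff.1 ht, rfl⟩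
  obtain ⟨g, hg, hgirr⟩ := ih _ hstep
  exact ⟨g, .head hstep hg, hgirr⟩

theorem sub_mem_opIdeal_of_rewrites {f g : kM k Z} (h : Rewrites (PiS lt S) f g) :
    f - g ∈ OpIdeal S := by
  induction h with
  | refl => simp
  | @tail b _ _ hstep ih =>
    obtain ⟨t, v, hr, -, rfl⟩ := oneStep_iff.1 hstep
    obtain ⟨s, hs, -, -, q, -, hq⟩ := exists_of_mem_PiS hlt hm hr
    rw [show f - (b - b t • (Finsupp.single t 1 - v)) = f - b + b t • (Finsupp.single t 1 - v)
      by abel, hq]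
    exact add_mem ih (Submodule.smul_mem _ _ (Submodule.subset_span ⟨s, hs, q, rfl⟩))

theorem joinable_add_smul_of_mem_opIdeal (hcf : Confluent (PiS lt S)) {x : kM k Z}
    (hx : x ∈ OpIdeal S) : ∀ (f : kM k Z) (c : k), Joinable (PiS lt S) (f + c • x) f := by
  induction hx using Submodule.span_induction with
  | mem x hx =>
    obtain ⟨s, hs, q, rfl⟩ := hx
    obtain ⟨w, hw, -⟩ := hm s hs
    have hr := mem_PiS hlt hm hs hw q
    simpa using joinable_add_smul_sub hr (snd_apply_fst_of_mem_PiS hlt hm hr)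
  | zero => exact fun f _ => ⟨f, by rw [smul_zero, add_zero]; exact .refl, .refl⟩
  | add x y _ _ hx hy =>
    intro f c
    rw [smul_add, ← add_assoc]
    exact (hy _ c).trans hcf (hx f c)
  | smul a x _ hx =>
    intro f c
    rw [smul_smul]
    exact hx f (c * a)

theorem rewrites_zero_of_mem_opIdeal (hcf : Confluent (PiS lt S)) {x : kM k Z}
    (hx : x ∈ OpIdeal S) : Rewrites (PiS lt S) x 0 := by
  obtain ⟨u, hxu, h0u⟩ := joinable_add_smul_of_mem_opIdeal hlt hm hcf hx 0 1
  rw [eq_zero_of_rewrites_zero h0u] at hxu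
  simpa using hxu

theorem disjoint_of_confluent (hcf : Confluent (PiS lt S)) :
    Disjoint (OpIdeal S) (spanSet k (IrrSet lt S)) :=
  Submodule.disjoint_def.2 fun _ hI hirr =>
    eq_of_rewrites_of_mem_spanSet_irrSet hirr (rewrites_zero_of_mem_opIdeal hlt hm hcf hI)

theorem confluent_of_disjoint (hd : Disjoint (OpIdeal S) (spanSet k (IrrSet lt S))) :
    Confluent (PiS lt S) := by
  intro f g₁ g₂ h₁ h₂
  obtain ⟨n₁, hn₁, hirr₁⟩ := exists_rewrites_mem_spanSet_irrSet hlt hm g₁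
  obtain ⟨n₂, hn₂, hirr₂⟩ := exists_rewrites_mem_spanSet_irrSet hlt hm g₂
  have hI : n₁ - n₂ ∈ OpIdeal S := by
    rw [← sub_sub_sub_cancel_left n₂ n₁ f]
    exact sub_mem (sub_mem_opIdeal_of_rewrites hlt hm (h₂.trans hn₂))
      (sub_mem_opIdeal_of_rewrites hlt hm (h₁.trans hn₁))
  have hn : n₁ = n₂ := sub_eq_zero.1 (Submodule.disjoint_def.1 hd _ hI (sub_mem hirr₁ hirr₂))
  exact ⟨n₁, hn₁, hn ▸ hn₂⟩

theorem codisjoint_opIdeal_spanSet_irrSet : Codisjoint (OpIdeal S) (spanSet k (IrrSet lt S)) := by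
  refine codisjoint_iff.2 (eq_top_iff.2 fun f _ => ?_)
  obtain ⟨g, hg, hirr⟩ := exists_rewrites_mem_spanSet_irrSet hlt hm f
  rw [← sub_add_cancel f g]
  exact Submodule.add_mem_sup (sub_mem_opIdeal_of_rewrites hlt hm hg) hirr

end NormalForms

section LeadSpan

variable {k Z : Type} [Field k] {lt : OpWord Z → OpWord Z → Prop} {S : Set (kM k Z)}

noncomputable def leadSpan (lt : OpWord Z → OpWord Z → Prop) (S : Set (kM k Z))
    (T : Set (OpWord Z)) : Submodule k (kM k Z) :=
  Submodule.span k { x | ∃ s ∈ S, ∃ ws, IsLeadingMonomial lt s ws ∧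
    ∃ q : StarWord Z, q.subst ws ∈ T ∧ x = q.substF s }

theorem substF_mem_leadSpan {s : kM k Z} (hs : s ∈ S) {ws : OpWord Z}
    (hws : IsLeadingMonomial lt s ws) {q : StarWord Z} {T : Set (OpWord Z)}
    (hq : q.subst ws ∈ T) : q.substF s ∈ leadSpan lt S T :=
  Submodule.subset_span ⟨s, hs, ws, hws, q, hq, rfl⟩

theorem leadSpan_mono {T T' : Set (OpWord Z)} (h : T ⊆ T') :
    leadSpan lt S T ≤ leadSpan lt S T' :=
  Submodule.span_mono fun _ ⟨s, hs, ws, hws, q, hq, hx⟩ => ⟨s, hs, ws, hws, q, h hq, hx⟩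

theorem trivialMod_iff_mem_leadSpan {w : OpWord Z} {h : kM k Z} :
    TrivialMod lt S w h ↔ h ∈ leadSpan lt S {x | lt x w} := by
  constructor
  · rintro ⟨n, c, q, s, hS, hlm, rfl⟩
    refine Submodule.sum_mem _ fun i _ => Submodule.smul_mem _ _ ?_
    obtain ⟨wi, hwi, hlti⟩ := hlm i
    exact substF_mem_leadSpan (hS i) hwi hlti
  · intro hmem
    obtain ⟨n, c, g, hsum⟩ := Submodule.mem_span_set'.1 hmem
    choose s hsS ws hws q hq hx using fun i => (g i).2
    exact ⟨n, c, q, s, hsS, fun i => ⟨ws i, hws i, hq i⟩, by simp only [← hsum, hx]⟩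

theorem substF_mem_leadSpan_lt (hlt : IsMonomialOrder lt) (Q : StarWord Z) {w : OpWord Z}
    {h : kM k Z} (hh : h ∈ leadSpan lt S {x | lt x w}) :
    Q.substF h ∈ leadSpan lt S {x | lt x (Q.subst w)} := by
  refine Submodule.span_mono ?_
    (Submodule.apply_mem_span_image_of_mem_span (Finsupp.lmapDomain k k Q.subst) hh)
  rintro _ ⟨_, ⟨s, hs, ws, hws, q, hq, rfl⟩, rfl⟩
  refine ⟨s, hs, ws, hws, Q.comp q, ?_, (StarWord.substF_comp Q q s).symm⟩
  rw [Set.mem_ofPred_eq, StarWord.subst_comp]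
  exact hlt.compat Q _ _ hq

theorem leadSpan_lt_le_supported (hlt : IsMonomialOrder lt) (hm : Monicized lt S)
    (w : OpWord Z) : leadSpan lt S {x | lt x w} ≤ Finsupp.supported k k {x | lt x w} := by
  refine Submodule.span_le.2 ?_
  rintro _ ⟨s, hs, ws, hws, q, hq, rfl⟩
  rw [SetLike.mem_coe, ← sub_add_cancel (q.substF s) (Finsupp.single (q.subst ws) 1)]
  refine add_mem (Finsupp.supported_mono (fun x hx => hlt.trans hx hq)
    (substF_sub_single_mem_supported_lt hlt hws (coeff_eq_one_of_monicized hlt hm hs hws) q))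
    (Finsupp.single_mem_supported k _ hq)

theorem sub_mem_leadSpan_of_rewrites (hlt : IsMonomialOrder lt) (hm : Monicized lt S)
    {w : OpWord Z} {f g : kM k Z} (h : Rewrites (PiS lt S) f g)
    (hf : f ∈ Finsupp.supported k k {x | lt x w}) : f - g ∈ leadSpan lt S {x | lt x w} := by
  induction h with
  | refl => simp
  | @tail b _ _ hstep ih =>
    obtain ⟨t, v, hr, hbt, rfl⟩ := oneStep_iff.1 hstep
    obtain ⟨s, hs, ws, hws, q, rfl, hq⟩ := exists_of_mem_PiS hlt hm hr
    have hb : b ∈ Finsupp.supported k k {x | lt x w} := by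
      rw [← sub_sub_cancel f b]
      exact sub_mem hf (leadSpan_lt_le_supported hlt hm w ih)
    rw [show f - (b - b (q.subst ws) • (Finsupp.single (q.subst ws) 1 - v))
      = f - b + b (q.subst ws) • (Finsupp.single (q.subst ws) 1 - v) by abel, hq]
    exact add_mem ih (Submodule.smul_mem _ _
      (substF_mem_leadSpan hs hws (hb (Finsupp.mem_support_iff.2 hbt))))

end LeadSpan

section Ambiguities

variable {k Z : Type} [Field k] {lt : OpWord Z → OpWord Z → Prop} {S : Set (kM k Z)}

def AmbiguitiesResolvable (lt : OpWord Z → OpWord Z → Prop) (S : Set (kM k Z)) : Prop :=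
  ∀ s₁ ∈ S, ∀ s₂ ∈ S, ∀ (w₁ w₂ : OpWord Z) (q₁ q₂ : StarWord Z),
    IsLeadingMonomial lt s₁ w₁ → IsLeadingMonomial lt s₂ w₂ → q₁.subst w₁ = q₂.subst w₂ →
    q₁.substF s₁ - q₂.substF s₂ ∈ leadSpan lt S {x | lt x (q₁.subst w₁)}

variable (hlt : IsMonomialOrder lt) (hm : Monicized lt S)
include hlt hm

theorem ambiguitiesResolvable_of_confluent (hcf : Confluent (PiS lt S)) :
    AmbiguitiesResolvable lt S := by
  intro s₁ hs₁ s₂ hs₂ w₁ w₂ q₁ q₂ hw₁ hw₂ heq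
  have hI : q₁.substF s₁ - q₂.substF s₂ ∈ OpIdeal S :=
    sub_mem (Submodule.subset_span ⟨s₁, hs₁, q₁, rfl⟩) (Submodule.subset_span ⟨s₂, hs₂, q₂, rfl⟩)
  have hlow : q₁.substF s₁ - q₂.substF s₂ ∈ Finsupp.supported k k {x | lt x (q₁.subst w₁)} := by
    rw [← sub_sub_sub_cancel_right _ _ (Finsupp.single (q₁.subst w₁) 1)]
    refine sub_mem (substF_sub_single_mem_supported_lt hlt hw₁
      (coeff_eq_one_of_monicized hlt hm hs₁ hw₁) q₁) ?_
    rw [heq]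
    exact substF_sub_single_mem_supported_lt hlt hw₂ (coeff_eq_one_of_monicized hlt hm hs₂ hw₂) q₂
  simpa using sub_mem_leadSpan_of_rewrites hlt hm (rewrites_zero_of_mem_opIdeal hlt hm hcf hI) hlow

theorem isGSBasis_of_ambiguitiesResolvable (h : AmbiguitiesResolvable lt S) :
    IsGSBasis lt S := by
  rw [IsGSBasis, monicVersion_eq hlt hm]
  refine ⟨fun f hf g hg wf wg u v w hwf hwg hw₁ hw₂ _ _ => ?_,
    fun f hf g hg wf wg q hwf hwg hq => ?_⟩
  · have := h f hf g hg wf wg (.mul .one .star u) (.mul v .star .one) hwf hwg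
      (by simp only [StarWord.subst, OpWord.one_mul, OpWord.mul_one, ← hw₁, hw₂])
    simp only [StarWord.subst, OpWord.one_mul] at this
    rwa [trivialMod_iff_mem_leadSpan, mulWordRight_eq_substF, mulWordLeft_eq_substF, hw₁]
  · rw [trivialMod_iff_mem_leadSpan]
    have := h f hf g hg wf wg .star q hwf hwg hq
    rwa [StarWord.substF_star] at this

end Ambiguities

theorem sum_smul_mapDomain_comm {R α β γ : Type*} [CommSemiring R] (s₁ : α →₀ R)
    (s₂ : β →₀ R) (g : α → β → γ) :
    (s₂.sum fun y b => b • Finsupp.mapDomain (g · y) s₁) =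
      s₁.sum fun x a => a • Finsupp.mapDomain (g x ·) s₂ := by
  simp only [Finsupp.mapDomain, Finsupp.smul_sum, Finsupp.smul_single, smul_eq_mul]
  rw [Finsupp.sum_comm]
  simp only [mul_comm]

section CompositionLemma

variable {k Z : Type} [Field k] {lt : OpWord Z → OpWord Z → Prop} {S : Set (kM k Z)}
variable (hlt : IsMonomialOrder lt) (hm : Monicized lt S)
include hlt hm

theorem IsGSBasis.sub_substF_mem_leadSpan (hgs : IsGSBasis lt S) {s₁ s₂ : kM k Z}
    (hs₁ : s₁ ∈ S) (hs₂ : s₂ ∈ S) {w₁ w₂ : OpWord Z} (hw₁ : IsLeadingMonomial lt s₁ w₁)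
    (hw₂ : IsLeadingMonomial lt s₂ w₂) {p : StarWord Z} (hp : w₁ = p.subst w₂) :
    s₁ - p.substF s₂ ∈ leadSpan lt S {x | lt x w₁} := by
  rw [IsGSBasis, monicVersion_eq hlt hm] at hgs
  exact trivialMod_iff_mem_leadSpan.1 (hgs.2 s₁ hs₁ s₂ hs₂ w₁ w₂ p hw₁ hw₂ hp)

theorem IsGSBasis.mulWordRight_sub_mulWordLeft_mem_leadSpan (hgs : IsGSBasis lt S)
    {s₁ s₂ : kM k Z} (hs₁ : s₁ ∈ S) (hs₂ : s₂ ∈ S) {w₁ w₂ : OpWord Z}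
    (hw₁ : IsLeadingMonomial lt s₁ w₁) (hw₂ : IsLeadingMonomial lt s₂ w₂) {c r d : OpWord Z}
    (hc : c ≠ .one) (hr : r ≠ .one) (hd : d ≠ .one) (h₁ : w₁ = c.mul r) (h₂ : w₂ = r.mul d) :
    mulWordRight s₁ d - mulWordLeft c s₂ ∈ leadSpan lt S {x | lt x (w₁.mul d)} := by
  rw [IsGSBasis, monicVersion_eq hlt hm] at hgs
  have := OpWord.one_le_breadth hc
  have := OpWord.one_le_breadth hr
  have := OpWord.one_le_breadth hd
  refine trivialMod_iff_mem_leadSpan.1 (hgs.1 s₁ hs₁ s₂ hs₂ w₁ w₂ d c _ hw₁ hw₂ rfl ?_ ?_ ?_)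
  · rw [h₁, h₂, OpWord.mul_assoc]
  · simp only [h₁, h₂, OpWord.breadth_mul]
    exact Nat.max_lt.2 ⟨by omega, by omega⟩
  · simp only [h₁, h₂, OpWord.breadth_mul]
    omega

theorem sub_mem_leadSpan_of_nested (hgs : IsGSBasis lt S) {s₁ s₂ : kM k Z} (hs₁ : s₁ ∈ S)
    (hs₂ : s₂ ∈ S) {w₁ w₂ : OpWord Z} (hw₁ : IsLeadingMonomial lt s₁ w₁)
    (hw₂ : IsLeadingMonomial lt s₂ w₂) {q₁ q₂ : StarWord Z} (h : StarWord.Nested q₁ w₁ q₂ w₂) :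
    q₁.substF s₁ - q₂.substF s₂ ∈ leadSpan lt S {x | lt x (q₁.subst w₁)} := by
  obtain ⟨p, hp, hq⟩ := h
  have e : q₂.substF s₂ = q₁.substF (p.substF s₂) := by
    rw [← StarWord.substF_comp]
    exact StarWord.substF_congr (fun x => by rw [hq, StarWord.subst_comp]) s₂
  rw [e, ← StarWord.substF_sub]
  exact substF_mem_leadSpan_lt hlt q₁ (hgs.sub_substF_mem_leadSpan hlt hm hs₁ hs₂ hw₁ hw₂ hp)

theorem sub_mem_leadSpan_of_overlapping (hgs : IsGSBasis lt S) {s₁ s₂ : kM k Z}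
    (hs₁ : s₁ ∈ S) (hs₂ : s₂ ∈ S) {w₁ w₂ : OpWord Z} (hw₁ : IsLeadingMonomial lt s₁ w₁)
    (hw₂ : IsLeadingMonomial lt s₂ w₂) {q₁ q₂ : StarWord Z}
    (h : StarWord.Overlapping q₁ w₁ q₂ w₂) :
    q₁.substF s₁ - q₂.substF s₂ ∈ leadSpan lt S {x | lt x (q₁.subst w₁)} := by
  obtain ⟨Q, c, r, d, hc, hr, hd, h₁, h₂, hq₁, hq₂⟩ := h
  have e₁ : q₁.substF s₁ = Q.substF (mulWordRight s₁ d) := by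
    rw [mulWordRight_eq_substF, ← StarWord.substF_comp]
    exact StarWord.substF_congr (fun x => by rw [hq₁, StarWord.subst_comp]; rfl) s₁
  have e₂ : q₂.substF s₂ = Q.substF (mulWordLeft c s₂) := by
    rw [mulWordLeft_eq_substF, ← StarWord.substF_comp]
    refine StarWord.substF_congr (fun y => ?_) s₂
    rw [hq₂, StarWord.subst_comp]
    simp only [StarWord.subst, OpWord.mul_one]
  rw [e₁, e₂, ← StarWord.substF_sub, hq₁]
  exact substF_mem_leadSpan_lt hlt Q
    (hgs.mulWordRight_sub_mulWordLeft_mem_leadSpan hlt hm hs₁ hs₂ hw₁ hw₂ hc hr hd h₁ h₂)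

/-- Expanding `s₂` in the second hole: only its leading monomial `w₂` gives `q₁|_{s₁}`, the
other monomials of `s₂` give strictly smaller leading words. -/
theorem sub_sum_mem_leadSpan_of_separated {s₁ s₂ : kM k Z} (hs₁ : s₁ ∈ S) (hs₂ : s₂ ∈ S)
    {w₁ w₂ : OpWord Z} (hw₁ : IsLeadingMonomial lt s₁ w₁) (hw₂ : IsLeadingMonomial lt s₂ w₂)
    {q₁ q₂ : StarWord Z} {g : OpWord Z → OpWord Z → OpWord Z}
    (hg : ∀ y, ∃ qy : StarWord Z, ∀ x, g x y = qy.subst x)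
    (h₁ : ∀ x, q₁.subst x = g x w₂) (h₂ : ∀ y, q₂.subst y = g w₁ y) :
    q₁.substF s₁ - (s₂.sum fun y b => b • Finsupp.mapDomain (g · y) s₁) ∈
      leadSpan lt S {x | lt x (q₁.subst w₁)} := by
  classical
  have e : q₁.substF s₁ = Finsupp.mapDomain (g · w₂) s₁ :=
    congrArg (Finsupp.mapDomain · s₁) (funext h₁)
  rw [e, Finsupp.sum, ← Finset.add_sum_erase _ _ hw₂.1, coeff_eq_one_of_monicized hlt hm hs₂ hw₂,
    one_smul, sub_add_cancel_left]
  refine neg_mem (Submodule.sum_mem _ fun y hy => Submodule.smul_mem _ _ ?_)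
  obtain ⟨hyw, hy⟩ := Finset.mem_erase.1 hy
  obtain ⟨qy, hqy⟩ := hg y
  rw [show Finsupp.mapDomain (g · y) s₁ = qy.substF s₁ from
    congrArg (Finsupp.mapDomain · s₁) (funext hqy)]
  refine substF_mem_leadSpan hs₁ hw₁ ?_
  show lt (qy.subst w₁) (q₁.subst w₁)
  rw [← hqy, h₁, ← h₂, ← h₂]
  exact hlt.compat q₂ y w₂ (hw₂.2 y hy hyw)

theorem sub_mem_leadSpan_of_separated {s₁ s₂ : kM k Z} (hs₁ : s₁ ∈ S) (hs₂ : s₂ ∈ S)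
    {w₁ w₂ : OpWord Z} (hw₁ : IsLeadingMonomial lt s₁ w₁) (hw₂ : IsLeadingMonomial lt s₂ w₂)
    {q₁ q₂ : StarWord Z} (h : StarWord.Separated q₁ w₁ q₂ w₂) :
    q₁.substF s₁ - q₂.substF s₂ ∈ leadSpan lt S {x | lt x (q₁.subst w₁)} := by
  obtain ⟨g, hy, hx, h₁, h₂⟩ := h
  have e₁ := sub_sum_mem_leadSpan_of_separated hlt hm hs₁ hs₂ hw₁ hw₂ hy h₁ h₂
  have e₂ := sub_sum_mem_leadSpan_of_separated hlt hm hs₂ hs₁ hw₂ hw₁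
    (g := fun y x => g x y) hx h₂ h₁
  rw [h₂, ← h₁, ← sum_smul_mapDomain_comm] at e₂
  simpa using sub_mem e₁ e₂

theorem ambiguitiesResolvable_of_isGSBasis (hgs : IsGSBasis lt S) :
    AmbiguitiesResolvable lt S := by
  intro s₁ hs₁ s₂ hs₂ w₁ w₂ q₁ q₂ hw₁ hw₂ heq
  rcases StarWord.occurrenceCases_of_subst_eq heq with h | h | h | h | h
  · exact sub_mem_leadSpan_of_nested hlt hm hgs hs₁ hs₂ hw₁ hw₂ h
  · rw [← neg_sub, heq]
    exact neg_mem (sub_mem_leadSpan_of_nested hlt hm hgs hs₂ hs₁ hw₂ hw₁ h)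
  · exact sub_mem_leadSpan_of_separated hlt hm hs₁ hs₂ hw₁ hw₂ h
  · exact sub_mem_leadSpan_of_overlapping hlt hm hgs hs₁ hs₂ hw₁ hw₂ h
  · rw [← neg_sub, heq]
    exact neg_mem (sub_mem_leadSpan_of_overlapping hlt hm hgs hs₂ hs₁ hw₂ hw₁ h)

end CompositionLemma

section DiamondLemma

variable {k Z : Type} [Field k] {lt : OpWord Z → OpWord Z → Prop} {S : Set (kM k Z)}

theorem eq_zero_or_exists_mem_leadSpan_le (hlt : IsMonomialOrder lt) {T : Set (OpWord Z)}
    {x : kM k Z} (hx : x ∈ leadSpan lt S T) :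
    x = 0 ∨ ∃ w ∈ T, x ∈ leadSpan lt S {y | y = w ∨ lt y w} := by
  have mono : ∀ {a b : OpWord Z}, lt a b →
      leadSpan lt S {y | y = a ∨ lt y a} ≤ leadSpan lt S {y | y = b ∨ lt y b} :=
    fun hab => leadSpan_mono fun y hy => Or.inr (hy.elim (· ▸ hab) (hlt.trans · hab))
  induction hx using Submodule.span_induction with
  | mem x hx =>
    obtain ⟨s, hs, ws, hws, q, hq, rfl⟩ := hx
    exact Or.inr ⟨_, hq, substF_mem_leadSpan hs hws (Or.inl rfl)⟩
  | zero => exact Or.inl rfl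
  | add x y _ _ hx hy =>
    rcases hx with rfl | ⟨a, ha, hxa⟩
    · rwa [zero_add]
    rcases hy with rfl | ⟨b, hb, hyb⟩
    · rw [add_zero]
      exact Or.inr ⟨a, ha, hxa⟩
    rcases hlt.trichotomous a b with hab | rfl | hba
    · exact Or.inr ⟨b, hb, add_mem (mono hab hxa) hyb⟩
    · exact Or.inr ⟨a, ha, add_mem hxa hyb⟩
    · exact Or.inr ⟨a, ha, add_mem hxa (mono hba hyb)⟩
  | smul c x _ hx =>
    rcases hx with rfl | ⟨a, ha, hxa⟩
    · exact Or.inl (smul_zero c)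
    · exact Or.inr ⟨a, ha, Submodule.smul_mem _ c hxa⟩

theorem opIdeal_le_leadSpan_univ (hm : Monicized lt S) : OpIdeal S ≤ leadSpan lt S Set.univ :=
  Submodule.span_mono fun _ ⟨s, hs, q, hx⟩ =>
    let ⟨w, hw, _⟩ := hm s hs
    ⟨s, hs, w, hw, q, trivial, hx⟩

theorem exists_sub_smul_mem_leadSpan_lt (hres : AmbiguitiesResolvable lt S) {s₀ : kM k Z}
    (hs₀ : s₀ ∈ S) {w₀ : OpWord Z} (hw₀ : IsLeadingMonomial lt s₀ w₀) (q₀ : StarWord Z)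
    {f : kM k Z}
    (hf : f ∈ leadSpan lt S {y | y = q₀.subst w₀ ∨ lt y (q₀.subst w₀)}) :
    ∃ c : k, f - c • q₀.substF s₀ ∈ leadSpan lt S {y | lt y (q₀.subst w₀)} := by
  induction hf using Submodule.span_induction with
  | mem x hx =>
    obtain ⟨s, hs, ws, hws, q, hq | hq, rfl⟩ := hx
    · refine ⟨1, ?_⟩
      rw [one_smul, ← neg_sub]
      exact neg_mem (hres s₀ hs₀ s hs w₀ ws q₀ q hw₀ hws hq.symm)
    · exact ⟨0, by simpa using substF_mem_leadSpan hs hws hq⟩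
  | zero => exact ⟨0, by simp⟩
  | add x y _ _ hx hy =>
    obtain ⟨a, ha⟩ := hx
    obtain ⟨b, hb⟩ := hy
    exact ⟨a + b, by simpa only [add_smul, add_sub_add_comm] using add_mem ha hb⟩
  | smul c x _ hx =>
    obtain ⟨a, ha⟩ := hx
    exact ⟨c * a, by simpa only [mul_smul, smul_sub] using Submodule.smul_mem _ c ha⟩

variable (hlt : IsMonomialOrder lt) (hm : Monicized lt S)
include hlt hm

/-- The composition-diamond induction, on the largest leading word `w` occurring in a
representation of `f`: if `w` is the leading word of some `q₀|_{s₀}`, then modulo terms below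
`w` the representation is a multiple of `q₀|_{s₀}`. -/
theorem notMem_irrSet_of_mem_leadSpan (hres : AmbiguitiesResolvable lt S) (w : OpWord Z) :
    ∀ f ∈ leadSpan lt S {y | y = w ∨ lt y w}, ∀ t, IsLeadingMonomial lt f t →
      t ∉ IrrSet lt S := by
  induction w using hlt.wellOrder.wf.induction with
  | _ w ih =>
  have below : ∀ f ∈ leadSpan lt S {y | lt y w}, ∀ t, IsLeadingMonomial lt f t →
      t ∉ IrrSet lt S := by
    intro f hf t ht
    rcases eq_zero_or_exists_mem_leadSpan_le hlt hf with rfl | ⟨w', hw', hf'⟩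
    · exact absurd ht.1 (by simp)
    · exact ih w' hw' f hf' t ht
  intro f hf t ht
  by_cases hw : w ∈ IrrSet lt S
  · refine below f (Submodule.span_mono ?_ hf) t ht
    rintro _ ⟨s, hs, ws, hws, q, hq | hq, rfl⟩
    · exact absurd hw fun h => h ⟨s, hs, ws, hws, q, hq.symm⟩
    · exact ⟨s, hs, ws, hws, q, hq, rfl⟩
  obtain ⟨s₀, hs₀, w₀, hw₀, q₀, rfl⟩ := not_not.1 hw
  obtain ⟨c, hc⟩ := exists_sub_smul_mem_leadSpan_lt hres hs₀ hw₀ q₀ hf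
  by_cases hc0 : c = 0
  · exact below f (by simpa [hc0] using hc) t ht
  have hlow : f - c • Finsupp.single (q₀.subst w₀) 1 ∈
      Finsupp.supported k k {y | lt y (q₀.subst w₀)} := by
    rw [show f - c • Finsupp.single (q₀.subst w₀) 1 = (f - c • q₀.substF s₀)
      + c • (q₀.substF s₀ - Finsupp.single (q₀.subst w₀) 1) by module]
    exact add_mem (leadSpan_lt_le_supported hlt hm _ hc) (Submodule.smul_mem _ c
      (substF_sub_single_mem_supported_lt hlt hw₀ (coeff_eq_one_of_monicized hlt hm hs₀ hw₀) q₀))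
  rw [hlt.isLeadingMonomial_unique ht (isLeadingMonomial_of_sub_smul_single_mem hlt hc0 hlow)]
  exact hw

theorem disjoint_of_ambiguitiesResolvable (hres : AmbiguitiesResolvable lt S) :
    Disjoint (OpIdeal S) (spanSet k (IrrSet lt S)) := by
  refine Submodule.disjoint_def.2 fun f hI hirr => by_contra fun hf => ?_
  obtain ⟨t, ht⟩ := hlt.exists_isLeadingMonomial hf
  rcases eq_zero_or_exists_mem_leadSpan_le hlt (opIdeal_le_leadSpan_univ hm hI) with h0 | ⟨w, -, hw⟩
  · exact hf h0
  · rw [spanSet_eq_supported] at hirr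
    exact notMem_irrSet_of_mem_leadSpan hlt hm hres w f hw t ht (hirr ht.1)

end DiamondLemma

/-- Let `Z` be a set, `≤` a monomial order on `M(Z)`,
`S ⊆ kM(Z)` monicized with respect to `≤`, and `Π_S` the term-rewriting system
from `≤`. Then the following are equivalent: (1) `Π_S` is convergent;
(2) `Π_S` is confluent; (3) `Id(S) ∩ k·Irr(S) = 0`; (4) `kM(Z) = Id(S) ⊕ k·Irr(S)`;
(5) `S` is a Gröbner–Shirshov basis in `kM(Z)` with respect to `≤`. -/
theorem convergent_tfae {k Z : Type} [Field k]
    (lt : OpWord Z → OpWord Z → Prop) (h : IsMonomialOrder lt)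
    (S : Set (kM k Z)) (hm : Monicized lt S) :
    (ConvergentTRS (PiS lt S) ↔ Confluent (PiS lt S)) ∧
    (Confluent (PiS lt S) ↔ OpIdeal S ⊓ spanSet k (IrrSet lt S) = ⊥) ∧
    (OpIdeal S ⊓ spanSet k (IrrSet lt S) = ⊥ ↔
      IsCompl (OpIdeal S) (spanSet k (IrrSet lt S))) ∧
    (IsCompl (OpIdeal S) (spanSet k (IrrSet lt S)) ↔ IsGSBasis lt S) := by
  have confluent_iff : Confluent (PiS lt S) ↔ Disjoint (OpIdeal S) (spanSet k (IrrSet lt S)) :=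
    ⟨disjoint_of_confluent h hm, confluent_of_disjoint h hm⟩
  have disjoint_iff_isCompl : Disjoint (OpIdeal S) (spanSet k (IrrSet lt S)) ↔
      IsCompl (OpIdeal S) (spanSet k (IrrSet lt S)) :=
    ⟨fun hd => ⟨hd, codisjoint_opIdeal_spanSet_irrSet h hm⟩, IsCompl.disjoint⟩
  have disjoint_iff_isGSBasis : Disjoint (OpIdeal S) (spanSet k (IrrSet lt S)) ↔
      IsGSBasis lt S :=
    ⟨fun hd => isGSBasis_of_ambiguitiesResolvable h hm
        (ambiguitiesResolvable_of_confluent h hm (confluent_iff.2 hd)),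
      fun hgs =>
        disjoint_of_ambiguitiesResolvable h hm (ambiguitiesResolvable_of_isGSBasis h hm hgs)⟩
  rw [← disjoint_iff]
  exact ⟨⟨And.right, fun hc => ⟨terminating_PiS h hm, hc⟩⟩, confluent_iff, disjoint_iff_isCompl,
    disjoint_iff_isCompl.symm.trans disjoint_iff_isGSBasis⟩

end RotaGS
end
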